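/- Let T be a generalized Collatz mapping on Λ ⊆ E, and let Φ₁,…,Φ_ℓ be linear forms on E each of which is either positive for S_r (Φ_i(r_ω) ≥ 0 for all ω) or separating for T. Then the set C = {x ∈ Λ : Φ_i(x) > 0 for all i} is T-invariant. -/

import Mathlib

def toE {e : ℕ} (x : Fin e → ℤ) : Fin e → ℝ := fun i => (x i : ℝ)

def res {e : ℕ} (d : ℕ) (x : Fin e → ℤ) : Fin e → ZMod d := fun i => (x i : ZMod d)

/-! Applying `Φᵢ` to `d • T x = m • x + r` gives `d Φᵢ(T x) = m Φᵢ(x) + Φᵢ(r)`. For `x` in the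
cone the first summand is positive, and the second is either nonnegative (positive forms) or
smaller in absolute value (separating forms), so `Φᵢ(T x) > 0`. -/

lemma toE_add {e : ℕ} (x y : Fin e → ℤ) : toE (x + y) = toE x + toE y := by
  funext i; simp [toE]

lemma toE_zsmul {e : ℕ} (n : ℤ) (x : Fin e → ℤ) : toE (n • x) = (n : ℝ) • toE x := by
  funext i; simp [toE]

lemma mul_map_toE_eq_of_zsmul_eq {e : ℕ} (φ : (Fin e → ℝ) →ₗ[ℝ] ℝ) {c m : ℤ}
    {y x r : Fin e → ℤ} (h : c • y = m • x + r) :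
    (c : ℝ) * φ (toE y) = m * φ (toE x) + φ (toE r) := by
  have := congrArg (fun v => φ (toE v)) h
  simpa only [toE_add, toE_zsmul, map_add, map_smul, smul_eq_mul] using this

lemma add_pos_of_nonneg_or_abs_lt {α : Type*} [AddCommGroup α] [LinearOrder α]
    [IsOrderedAddMonoid α] {a b : α} (ha : 0 < a) (hb : 0 ≤ b ∨ |b| < |a|) : 0 < a + b := by
  rcases hb with hb | hb
  · exact add_pos_of_pos_of_nonneg ha hb
  · rw [abs_of_pos ha] at hb
    rw [add_comm]
    exact neg_lt_iff_pos_add.mp (neg_lt_of_abs_lt hb)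

theorem positive_cone_invariant_general
    {e : ℕ} (d : ℕ)
    (m : (Fin e → ZMod d) → ℤ) (r : (Fin e → ZMod d) → (Fin e → ℤ))
    (hm : ∀ ω, 0 < m ω)
    (T : (Fin e → ℤ) → (Fin e → ℤ))
    (hT : ∀ x : Fin e → ℤ, (d : ℤ) • T x = m (res d x) • x + r (res d x))
    (ℓ : ℕ) (Φ : Fin ℓ → ((Fin e → ℝ) →ₗ[ℝ] ℝ))
    (hΦ : ∀ i : Fin ℓ,
      (∀ ω, 0 ≤ (Φ i) (toE (r ω))) ∨
      (∀ x : Fin e → ℤ, (Φ i) (toE x) ≠ 0 →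
        |(Φ i) (toE (r (res d x)))| < |(m (res d x) : ℝ) * (Φ i) (toE x)|)) :
    ∀ x : Fin e → ℤ, (∀ i : Fin ℓ, 0 < (Φ i) (toE x)) →
      ∀ i : Fin ℓ, 0 < (Φ i) (toE (T x)) := by
  intro x hx i
  have hstep := mul_map_toE_eq_of_zsmul_eq (Φ i) (hT x)
  have hmx : 0 < (m (res d x) : ℝ) * Φ i (toE x) :=
    mul_pos (Int.cast_pos.mpr (hm _)) (hx i)
  have hsum := add_pos_of_nonneg_or_abs_lt hmx
    ((hΦ i).imp (fun hpos => hpos _) (fun hsep => hsep x (hx i).ne'))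
  rw [← hstep, Int.cast_natCast] at hsum
  exact pos_of_mul_pos_right hsum (Nat.cast_nonneg d)

/-- if each of the linear forms `Φ₁, …, Φ_ℓ` is either positive for
the shift vectors or separating for `T`, then the cone
`C = {x ∈ Λ | Φᵢ(x) > 0 for all i}` is `T`-invariant. -/
theorem positive_cone_invariant
    {e : ℕ} (d : ℕ) (hd : 1 < d)
    (m : (Fin e → ZMod d) → ℤ) (r : (Fin e → ZMod d) → (Fin e → ℤ))
    (hm : ∀ ω, 0 < m ω)
    (T : (Fin e → ℤ) → (Fin e → ℤ))
    (hT : ∀ x : Fin e → ℤ, (d : ℤ) • T x = m (res d x) • x + r (res d x))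
    (ℓ : ℕ) (Φ : Fin ℓ → ((Fin e → ℝ) →ₗ[ℝ] ℝ))
    (hΦ : ∀ i : Fin ℓ,
      (∀ ω, 0 ≤ (Φ i) (toE (r ω))) ∨
      (∀ x : Fin e → ℤ, (Φ i) (toE x) ≠ 0 →
        |(Φ i) (toE (r (res d x)))| < |(m (res d x) : ℝ) * (Φ i) (toE x)|)) :
    ∀ x : Fin e → ℤ, (∀ i : Fin ℓ, 0 < (Φ i) (toE x)) →
      ∀ i : Fin ℓ, 0 < (Φ i) (toE (T x)) :=
  positive_cone_invariant_general d m r hm T hT ℓ Φ hΦ
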